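/- arXiv:2404.03091 — 2 statements merged into one kernel-verified Lean document; each statement's English description precedes it below -/
import Mathlib

section
/- Let n ≥ 5 be an integer, and set n_x := ⌈n/2⌉, n_y := ⌈n/4⌉. Consider the set of all (x, y, X, Y, γ) where x, y ∈ [0,1]^n, X and Y are real symmetric n×n matrices with X − x xᵀ positive semidefinite and Y − y yᵀ positive semidefinite, γ ∈ ℝ, and: X_{ii} − 2X_{ij} + X_{jj} + Y_{ii} − 2Y_{ij} + Y_{jj} ≥ γ for all 1 ≤ i < j ≤ n; X_{ii} ≤ x_i/2 for i ≤ n_x and X_{ii} ≤ x_i for i > n_x; Y_{ii} ≤ y_i/2 for i ≤ n_y and Y_{ii} ≤ y_i for i > n_y. Then the maximum value of γ over this set is attained and equals (1/4)(1 + 1/⌊(n−1)/4⌋). (This is the optimal value of the SDP relaxation (SDP2).) -/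
/-!
Sum the pair constraints over a set `s` of `m = k + 1` indices on which both diagonal bounds are
halved (the first `⌈n/4⌉` indices). With `t = ∑_{i∈s} x_i`, positive semidefiniteness of
`X - x xᵀ` gives `∑_{i,j∈s} X_ij ≥ t²` and the halved bounds give `∑_{i∈s} X_ii ≤ t/2`, so the
`X`-part of the sum is at most `m t - 2 t² ≤ m²/8`, and likewise for `Y`. Hence
`m (m - 1) γ ≤ m²/4`, i.e. `γ ≤ (1 + 1/k)/4`. Equality is attained by putting the points of `s`
at `(1/4, 1/4)`, the others at `(0, 1/2)`, and adding to `x xᵀ`, `y yᵀ` a multiple of the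
Laplacian of the complete graph on `s`.
-/

open Finset Matrix

variable {ι : Type*}

/-- For a Gram matrix `X i j = ⟪p i, p j⟫` this is `‖p i - p j‖²`; it is the lifted form of
`(x i - x j) ^ 2` in the relaxation. -/
def gramSqDist (X : Matrix ι ι ℝ) (i j : ι) : ℝ := X i i - 2 * X i j + X j j

lemma gramSqDist_comm {X : Matrix ι ι ℝ} (hX : X.IsSymm) (i j : ι) :
    gramSqDist X i j = gramSqDist X j i := by
  simp only [gramSqDist, hX.apply i j]
  ring

lemma card_mul_card_sub_one_mul_le_sum_sum [DecidableEq ι] (s : Finset ι) {f : ι → ι → ℝ}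
    {γ : ℝ} (hdiag : ∀ i ∈ s, f i i = 0) (hoff : ∀ i ∈ s, ∀ j ∈ s, i ≠ j → γ ≤ f i j) :
    (#s : ℝ) * (#s - 1) * γ ≤ ∑ i ∈ s, ∑ j ∈ s, f i j := by
  have hrow : ∀ i ∈ s, ((#s : ℝ) - 1) * γ ≤ ∑ j ∈ s, f i j := by
    intro i hi
    rw [← sum_erase s (hdiag i hi)]
    have := card_nsmul_le_sum (s.erase i) (f i) γ fun j hj =>
      hoff i hi j (mem_of_mem_erase hj) (ne_of_mem_erase hj).symm
    rwa [nsmul_eq_mul, card_erase_of_mem hi, Nat.cast_pred (card_pos.2 ⟨i, hi⟩)] at this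
  calc (#s : ℝ) * (#s - 1) * γ = ∑ i ∈ s, ((#s : ℝ) - 1) * γ := by
        rw [sum_const, nsmul_eq_mul, mul_assoc]
    _ ≤ _ := sum_le_sum hrow

lemma sum_sum_gramSqDist (s : Finset ι) (X : Matrix ι ι ℝ) :
    ∑ i ∈ s, ∑ j ∈ s, gramSqDist X i j
      = 2 * #s * ∑ i ∈ s, X i i - 2 * ∑ i ∈ s, ∑ j ∈ s, X i j := by
  simp only [gramSqDist, sum_add_distrib, sum_sub_distrib, sum_const, nsmul_eq_mul, ← mul_sum]
  ring

lemma sq_sum_le_sum_sum_of_posSemidef [Fintype ι] [DecidableEq ι] (s : Finset ι) {x : ι → ℝ}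
    {X : Matrix ι ι ℝ} (hX : (X - vecMulVec x x).PosSemidef) :
    (∑ i ∈ s, x i) ^ 2 ≤ ∑ i ∈ s, ∑ j ∈ s, X i j := by
  have := hX.dotProduct_mulVec_nonneg (fun i => if i ∈ s then 1 else 0)
  simp only [star_trivial, dotProduct, mulVec, Matrix.sub_apply, vecMulVec_apply, ite_mul, mul_ite,
    one_mul, zero_mul, mul_one, mul_zero, sum_ite_mem, univ_inter, sum_sub_distrib] at this
  rw [sq, sum_mul_sum]
  linarith

lemma sum_sum_gramSqDist_le [Fintype ι] [DecidableEq ι] (s : Finset ι) {x : ι → ℝ}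
    {X : Matrix ι ι ℝ} (hX : (X - vecMulVec x x).PosSemidef)
    (hdiag : ∀ i ∈ s, X i i ≤ x i / 2) :
    ∑ i ∈ s, ∑ j ∈ s, gramSqDist X i j ≤ (#s : ℝ) ^ 2 / 8 := by
  have hgram := sq_sum_le_sum_sum_of_posSemidef s hX
  have htrace : 2 * #s * ∑ i ∈ s, X i i ≤ 2 * #s * ((∑ i ∈ s, x i) / 2) := by
    rw [sum_div]
    gcongr with i hi
    exact hdiag i hi
  rw [sum_sum_gramSqDist]
  nlinarith [sq_nonneg ((#s : ℝ) - 4 * ∑ i ∈ s, x i)]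

lemma sdp2_value_le [Fintype ι] [DecidableEq ι] (s : Finset ι) {k : ℕ} (hs : #s = k + 1)
    (hk : 1 ≤ k) {x y : ι → ℝ} {X Y : Matrix ι ι ℝ} {γ : ℝ}
    (hX : (X - vecMulVec x x).PosSemidef) (hY : (Y - vecMulVec y y).PosSemidef)
    (hpair : ∀ i ∈ s, ∀ j ∈ s, i ≠ j → γ ≤ gramSqDist X i j + gramSqDist Y i j)
    (hXd : ∀ i ∈ s, X i i ≤ x i / 2) (hYd : ∀ i ∈ s, Y i i ≤ y i / 2) :
    γ ≤ 1 / 4 * (1 + 1 / (k : ℝ)) := by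
  have hsum := card_mul_card_sub_one_mul_le_sum_sum s
    (fun i _ => by simp only [gramSqDist]; ring) hpair
  have hXb := sum_sum_gramSqDist_le s hX hXd
  have hYb := sum_sum_gramSqDist_le s hY hYd
  simp only [sum_add_distrib, hs, Nat.cast_add, Nat.cast_one, add_sub_cancel_right] at hsum hXb hYb
  have hk0 : (0 : ℝ) < k := by exact_mod_cast hk
  rw [show 1 / 4 * (1 + 1 / (k : ℝ)) = (k + 1) / (4 * k) by field_simp,
    le_div_iff₀ (by positivity)]
  nlinarith

/-- The Laplacian of the complete graph on `s`, extended by zero: `#s • 1 - J` on `s × s`. -/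
def completeLaplacian [DecidableEq ι] (s : Finset ι) : Matrix ι ι ℝ :=
  of fun i j => if i ∈ s ∧ j ∈ s then (if i = j then (#s : ℝ) else 0) - 1 else 0

lemma completeLaplacian_mulVec [Fintype ι] [DecidableEq ι] (s : Finset ι) (v : ι → ℝ) (i : ι) :
    (completeLaplacian s *ᵥ v) i = if i ∈ s then #s * v i - ∑ j ∈ s, v j else 0 := by
  split_ifs with hi
  · simp [completeLaplacian, mulVec, dotProduct, hi, sub_mul, sum_sub_distrib]
  · simp [completeLaplacian, mulVec, dotProduct, hi]

lemma posSemidef_completeLaplacian [Fintype ι] [DecidableEq ι] (s : Finset ι) :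
    (completeLaplacian s).PosSemidef := by
  refine PosSemidef.of_dotProduct_mulVec_nonneg ?_ fun v => ?_
  · ext i j
    simp only [conjTranspose_apply, star_trivial, completeLaplacian, of_apply]
    simp only [and_comm, eq_comm]
  · have hCS := sq_sum_le_card_mul_sum_sq (s := s) (f := v)
    simp only [star_trivial, dotProduct, completeLaplacian_mulVec, mul_ite, mul_zero, sum_ite_mem,
      univ_inter, mul_sub, sum_sub_distrib, ← sum_mul]
    simp only [mul_left_comm _ (#s : ℝ), ← mul_sum, ← sq]
    linarith

lemma exists_sdp2_witness [Fintype ι] [DecidableEq ι] (s : Finset ι) {k : ℕ} (hs : #s = k + 1)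
    (hk : 1 ≤ k) :
    ∃ (x y : ι → ℝ) (X Y : Matrix ι ι ℝ),
      (∀ i, 0 ≤ x i ∧ x i ≤ 1) ∧ (∀ i, 0 ≤ y i ∧ y i ≤ 1) ∧ X.IsSymm ∧ Y.IsSymm ∧
      (X - vecMulVec x x).PosSemidef ∧ (Y - vecMulVec y y).PosSemidef ∧
      (∀ i j, i ≠ j → 1 / 4 * (1 + 1 / (k : ℝ)) ≤ gramSqDist X i j + gramSqDist Y i j) ∧
      (∀ i, X i i ≤ x i / 2) ∧ (∀ i, (i ∈ s → Y i i ≤ y i / 2) ∧ Y i i ≤ y i) := by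
  -- two points of `s` are then at `gramSqDist` `2 c #s = (1 + 1/k)/8` in each coordinate
  set c : ℝ := 1 / (16 * k)
  set x : ι → ℝ := fun i => if i ∈ s then 1 / 4 else 0
  set y : ι → ℝ := fun i => if i ∈ s then 1 / 4 else 1 / 2
  set D : Matrix ι ι ℝ := diagonal fun i => if i ∈ s then 0 else 1 / 4
  have hk1 : (1 : ℝ) ≤ k := by exact_mod_cast hk
  have hL : (c • completeLaplacian s).PosSemidef :=
    (posSemidef_completeLaplacian s).smul (by positivity)
  have hD : D.PosSemidef := PosSemidef.diagonal fun i => by dsimp only; split_ifs <;> norm_num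
  have hxx : (vecMulVec x x).PosSemidef := by simpa using posSemidef_vecMulVec_self_star x
  have hyy : (vecMulVec y y).PosSemidef := by simpa using posSemidef_vecMulVec_self_star y
  refine ⟨x, y, vecMulVec x x + c • completeLaplacian s,
    vecMulVec y y + (c • completeLaplacian s + D),
    fun i => ?_, fun i => ?_, isHermitian_iff_isSymm.1 (hxx.add hL).isHermitian,
    isHermitian_iff_isSymm.1 (hyy.add (hL.add hD)).isHermitian,
    by simpa using hL, by simpa using hL.add hD, fun i j hij => ?_, fun i => ?_, fun i => ?_⟩
  · by_cases hi : i ∈ s <;> simp only [x, hi, ↓reduceIte] <;> norm_num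
  · by_cases hi : i ∈ s <;> simp only [y, hi, ↓reduceIte] <;> norm_num
  · by_cases hi : i ∈ s <;> by_cases hj : j ∈ s <;>
      simp [gramSqDist, completeLaplacian, x, y, c, D, hi, hj, hij, hs, vecMulVec_apply] <;>
      field_simp <;> nlinarith
  · by_cases hi : i ∈ s <;> simp [completeLaplacian, x, c, hi, hs, vecMulVec_apply]
    field_simp
    norm_num
  · by_cases hi : i ∈ s <;> simp [completeLaplacian, y, c, D, hi, hs, vecMulVec_apply] <;>
      field_simp <;> norm_num

/-- The optimal value of the SDP relaxation (SDP2) of the circle packing problem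
(with tightened diagonal constraints) is `(1/4)(1 + 1/⌊(n-1)/4⌋)` for all `n ≥ 5`.
Here indices of `Fin n` are 0-based, so the 1-based condition `i ≤ n_x` reads
`(i : ℕ) + 1 ≤ n_x`; `n_x = ⌈n/2⌉ = (n+1)/2`, `n_y = ⌈n/4⌉ = (n+3)/4`, and
`⌊(n-1)/4⌋ = (n-1)/4` in ℕ. -/
theorem stmt_9 (n : ℕ) (hn : 5 ≤ n)
    (nx ny : ℕ) (hnx : nx = (n + 1) / 2) (hny : ny = (n + 3) / 4) :
    IsGreatest {γ : ℝ | ∃ (x y : Fin n → ℝ) (X Y : Matrix (Fin n) (Fin n) ℝ),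
      (∀ i, 0 ≤ x i ∧ x i ≤ 1) ∧ (∀ i, 0 ≤ y i ∧ y i ≤ 1) ∧
      X.IsSymm ∧ Y.IsSymm ∧
      (X - Matrix.vecMulVec x x).PosSemidef ∧
      (Y - Matrix.vecMulVec y y).PosSemidef ∧
      (∀ i j : Fin n, i < j →
        X i i - 2 * X i j + X j j + Y i i - 2 * Y i j + Y j j ≥ γ) ∧
      (∀ i : Fin n, ((i : ℕ) + 1 ≤ nx → X i i ≤ x i / 2) ∧
        (nx < (i : ℕ) + 1 → X i i ≤ x i)) ∧
      (∀ i : Fin n, ((i : ℕ) + 1 ≤ ny → Y i i ≤ y i / 2) ∧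
        (ny < (i : ℕ) + 1 → Y i i ≤ y i))}
    ((1/4) * (1 + 1 / (((n - 1) / 4 : ℕ) : ℝ))) := by
  set S : Finset (Fin n) := univ.filter fun i => (i : ℕ) < ny
  have hS : #S = (n - 1) / 4 + 1 := by rw [Fin.card_filter_val_lt]; omega
  have hk : 1 ≤ (n - 1) / 4 := by omega
  have hmem : ∀ i : Fin n, i ∈ S ↔ (i : ℕ) + 1 ≤ ny := fun i => by
    simp only [S, mem_filter, mem_univ, true_and, Nat.lt_iff_add_one_le]
  constructor
  · obtain ⟨x, y, X, Y, hx, hy, hXs, hYs, hX, hY, hpair, hXd, hYd⟩ := exists_sdp2_witness S hS hk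
    refine ⟨x, y, X, Y, hx, hy, hXs, hYs, hX, hY, fun i j hij => ?_,
      fun i => ⟨fun _ => hXd i, fun _ => (hXd i).trans (by linarith [(hx i).1])⟩,
      fun i => ⟨fun h => (hYd i).1 ((hmem i).2 h), fun _ => (hYd i).2⟩⟩
    have := hpair i j hij.ne
    simp only [gramSqDist] at this
    linarith
  · rintro γ ⟨x, y, X, Y, -, -, hXs, hYs, hX, hY, hpair, hXd, hYd⟩
    refine sdp2_value_le S hS hk hX hY (fun i _ j _ hij => ?_)
      (fun i hi => (hXd i).1 (by have := (hmem i).1 hi; omega))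
      (fun i hi => (hYd i).1 ((hmem i).1 hi))
    rcases hij.lt_or_gt with h | h
    · have := hpair i j h
      simp only [gramSqDist]
      linarith
    · have := hpair j i h
      rw [gramSqDist_comm hXs, gramSqDist_comm hYs]
      simp only [gramSqDist]
      linarith
end

section
/- Let u₁, u₂ > 0 and let f(z₁, z₂) := (z₁ − z₂)² on the box H := [0, u₁] × [0, u₂]. Define g(z₁, z₂) := min(u₁ z₁ + u₂ z₂, 2 u₁ u₂ + (u₁ − 2 u₂) z₁ + (u₂ − 2 u₁) z₂). Then g is the concave envelope of f over H; that is: (a) g is concave on H; (b) g(z) ≥ f(z) for all z ∈ H; and (c) every concave function h on H with h ≥ f on H satisfies h ≥ g on H. -/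
/-!
The diagonal from `(u₁, 0)` to `(0, u₂)` splits the box into two triangles, and the two affine
pieces of `g` are the functions agreeing with `f` at the vertices of one triangle each. Both
pieces dominate `f` on the whole box, and `g` is concave as a minimum of affine functions.
Conversely, writing `z` as a convex combination of the vertices of a triangle containing it,
Jensen's inequality bounds a concave majorant `h` at `z` below by the same combination of the
values of `h`, hence of `f`, at those vertices, and that combination is the corresponding
affine piece of `g` at `z`.
-/

open Set

theorem ConcaveOn.le_map_smul_add_smul_add_smul {E : Type*} [AddCommGroup E] [Module ℝ E]
    {s : Set E} {h : E → ℝ} (hh : ConcaveOn ℝ s h) {a b c : ℝ} {p q r : E}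
    (ha : 0 ≤ a) (hb : 0 ≤ b) (hc : 0 ≤ c) (habc : a + b + c = 1)
    (hp : p ∈ s) (hq : q ∈ s) (hr : r ∈ s) :
    a * h p + b * h q + c * h r ≤ h (a • p + b • q + c • r) := by
  simpa [Fin.sum_univ_three] using
    hh.le_map_sum (t := Finset.univ) (w := ![a, b, c]) (p := ![p, q, r])
      (by simp [Fin.forall_fin_succ, ha, hb, hc]) (by simp [Fin.sum_univ_three, habc])
      (by simp [Fin.forall_fin_succ, hp, hq, hr])

theorem concaveOn_affine (a b c : ℝ) :
    ConcaveOn ℝ univ fun z : ℝ × ℝ ↦ a + b * z.1 + c * z.2 :=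
  ⟨convex_univ, fun x _ y _ p q _ _ hpq ↦ le_of_eq <| by
    simp only [Prod.fst_add, Prod.snd_add, Prod.smul_fst, Prod.smul_snd, smul_eq_mul]
    linear_combination a * hpq⟩

def sqDiffEnvelope (u₁ u₂ : ℝ) (z : ℝ × ℝ) : ℝ :=
  min (u₁ * z.1 + u₂ * z.2) (2 * u₁ * u₂ + (u₁ - 2 * u₂) * z.1 + (u₂ - 2 * u₁) * z.2)

theorem concaveOn_sqDiffEnvelope (u₁ u₂ : ℝ) : ConcaveOn ℝ univ (sqDiffEnvelope u₁ u₂) := by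
  have lower : ConcaveOn ℝ univ fun z : ℝ × ℝ ↦ u₁ * z.1 + u₂ * z.2 := by
    simpa using concaveOn_affine 0 u₁ u₂
  exact lower.inf (concaveOn_affine _ _ _)

section Box

variable {u₁ u₂ : ℝ} {z : ℝ × ℝ}

theorem sq_sub_le_sqDiffEnvelope (hz : z ∈ Icc 0 u₁ ×ˢ Icc 0 u₂) :
    (z.1 - z.2) ^ 2 ≤ sqDiffEnvelope u₁ u₂ z := by
  obtain ⟨⟨h₁, h₁'⟩, ⟨h₂, h₂'⟩⟩ := hz
  apply le_min
  · nlinarith [mul_nonneg h₁ h₂, mul_nonneg h₁ (sub_nonneg.2 h₁'),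
      mul_nonneg h₂ (sub_nonneg.2 h₂')]
  · nlinarith [mul_nonneg (sub_nonneg.2 h₁') (sub_nonneg.2 h₂'),
      mul_nonneg h₁ (sub_nonneg.2 h₁'), mul_nonneg h₂ (sub_nonneg.2 h₂')]

theorem mul_add_mul_le_of_concaveOn (hu₁ : 0 < u₁) (hu₂ : 0 < u₂) {h : ℝ × ℝ → ℝ}
    (hh : ConcaveOn ℝ (Icc 0 u₁ ×ˢ Icc 0 u₂) h)
    (hf : ∀ z ∈ Icc 0 u₁ ×ˢ Icc 0 u₂, (z.1 - z.2) ^ 2 ≤ h z)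
    (hz : z ∈ Icc 0 u₁ ×ˢ Icc 0 u₂) (hzt : z.1 / u₁ + z.2 / u₂ ≤ 1) :
    u₁ * z.1 + u₂ * z.2 ≤ h z := by
  obtain ⟨⟨h₁, -⟩, ⟨h₂, -⟩⟩ := hz
  have ha : 0 ≤ z.1 / u₁ := div_nonneg h₁ hu₁.le
  have hb : 0 ≤ z.2 / u₂ := div_nonneg h₂ hu₂.le
  have hc : 0 ≤ 1 - z.1 / u₁ - z.2 / u₂ := by linarith
  have hv₀ : ((0 : ℝ), (0 : ℝ)) ∈ Icc 0 u₁ ×ˢ Icc 0 u₂ := by simp [hu₁.le, hu₂.le]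
  have hv₁ : (u₁, (0 : ℝ)) ∈ Icc 0 u₁ ×ˢ Icc 0 u₂ := by simp [hu₁.le, hu₂.le]
  have hv₂ : ((0 : ℝ), u₂) ∈ Icc 0 u₁ ×ˢ Icc 0 u₂ := by simp [hu₁.le, hu₂.le]
  have hzv : (z.1 / u₁) • (u₁, (0 : ℝ)) + (z.2 / u₂) • ((0 : ℝ), u₂)
      + (1 - z.1 / u₁ - z.2 / u₂) • ((0 : ℝ), (0 : ℝ)) = z := by
    ext <;> simp only [Prod.smul_mk, smul_eq_mul, mul_zero, Prod.mk_add_mk, add_zero, zero_add]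
      <;> field_simp
  calc u₁ * z.1 + u₂ * z.2
      = z.1 / u₁ * (u₁ - 0) ^ 2 + z.2 / u₂ * (0 - u₂) ^ 2
        + (1 - z.1 / u₁ - z.2 / u₂) * (0 - 0) ^ 2 := by field_simp; ring
    _ ≤ z.1 / u₁ * h (u₁, 0) + z.2 / u₂ * h (0, u₂) + (1 - z.1 / u₁ - z.2 / u₂) * h (0, 0) :=
      add_le_add_three (mul_le_mul_of_nonneg_left (hf _ hv₁) ha)
        (mul_le_mul_of_nonneg_left (hf _ hv₂) hb) (mul_le_mul_of_nonneg_left (hf _ hv₀) hc)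
    _ ≤ h z :=
      (hh.le_map_smul_add_smul_add_smul ha hb hc (by ring) hv₁ hv₂ hv₀)
        |>.trans_eq (congrArg h hzv)

theorem le_of_concaveOn_of_one_le (hu₁ : 0 < u₁) (hu₂ : 0 < u₂) {h : ℝ × ℝ → ℝ}
    (hh : ConcaveOn ℝ (Icc 0 u₁ ×ˢ Icc 0 u₂) h)
    (hf : ∀ z ∈ Icc 0 u₁ ×ˢ Icc 0 u₂, (z.1 - z.2) ^ 2 ≤ h z)
    (hz : z ∈ Icc 0 u₁ ×ˢ Icc 0 u₂) (hzt : 1 ≤ z.1 / u₁ + z.2 / u₂) :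
    2 * u₁ * u₂ + (u₁ - 2 * u₂) * z.1 + (u₂ - 2 * u₁) * z.2 ≤ h z := by
  obtain ⟨⟨-, h₁⟩, ⟨-, h₂⟩⟩ := hz
  have ha : 0 ≤ 1 - z.2 / u₂ := sub_nonneg.2 (div_le_one_of_le₀ h₂ hu₂.le)
  have hb : 0 ≤ 1 - z.1 / u₁ := sub_nonneg.2 (div_le_one_of_le₀ h₁ hu₁.le)
  have hc : 0 ≤ z.1 / u₁ + z.2 / u₂ - 1 := by linarith
  have hv₁ : (u₁, (0 : ℝ)) ∈ Icc 0 u₁ ×ˢ Icc 0 u₂ := by simp [hu₁.le, hu₂.le]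
  have hv₂ : ((0 : ℝ), u₂) ∈ Icc 0 u₁ ×ˢ Icc 0 u₂ := by simp [hu₁.le, hu₂.le]
  have hv₃ : (u₁, u₂) ∈ Icc 0 u₁ ×ˢ Icc 0 u₂ := by simp [hu₁.le, hu₂.le]
  have hzv : (1 - z.2 / u₂) • (u₁, (0 : ℝ)) + (1 - z.1 / u₁) • ((0 : ℝ), u₂)
      + (z.1 / u₁ + z.2 / u₂ - 1) • (u₁, u₂) = z := by
    ext <;> simp only [Prod.smul_mk, smul_eq_mul, mul_zero, Prod.mk_add_mk, add_zero, zero_add]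
      <;> field_simp <;> ring
  calc 2 * u₁ * u₂ + (u₁ - 2 * u₂) * z.1 + (u₂ - 2 * u₁) * z.2
      = (1 - z.2 / u₂) * (u₁ - 0) ^ 2 + (1 - z.1 / u₁) * (0 - u₂) ^ 2
        + (z.1 / u₁ + z.2 / u₂ - 1) * (u₁ - u₂) ^ 2 := by field_simp; ring
    _ ≤ (1 - z.2 / u₂) * h (u₁, 0) + (1 - z.1 / u₁) * h (0, u₂)
        + (z.1 / u₁ + z.2 / u₂ - 1) * h (u₁, u₂) :=
      add_le_add_three (mul_le_mul_of_nonneg_left (hf _ hv₁) ha)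
        (mul_le_mul_of_nonneg_left (hf _ hv₂) hb) (mul_le_mul_of_nonneg_left (hf _ hv₃) hc)
    _ ≤ h z :=
      (hh.le_map_smul_add_smul_add_smul ha hb hc (by ring) hv₁ hv₂ hv₃)
        |>.trans_eq (congrArg h hzv)

theorem sqDiffEnvelope_le_of_concaveOn (hu₁ : 0 < u₁) (hu₂ : 0 < u₂) {h : ℝ × ℝ → ℝ}
    (hh : ConcaveOn ℝ (Icc 0 u₁ ×ˢ Icc 0 u₂) h)
    (hf : ∀ z ∈ Icc 0 u₁ ×ˢ Icc 0 u₂, (z.1 - z.2) ^ 2 ≤ h z)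
    (hz : z ∈ Icc 0 u₁ ×ˢ Icc 0 u₂) : sqDiffEnvelope u₁ u₂ z ≤ h z := by
  rcases le_total (z.1 / u₁ + z.2 / u₂) 1 with hzt | hzt
  · exact (min_le_left _ _).trans (mul_add_mul_le_of_concaveOn hu₁ hu₂ hh hf hz hzt)
  · exact (min_le_right _ _).trans (le_of_concaveOn_of_one_le hu₁ hu₂ hh hf hz hzt)

end Box

/-- The function `g(z) = min(u₁ z₁ + u₂ z₂, 2u₁u₂ + (u₁ - 2u₂) z₁ + (u₂ - 2u₁) z₂)` is
the concave envelope of `f(z) = (z₁ - z₂)²` over the box `H = [0, u₁] × [0, u₂]`: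
(a) `g` is concave on `H`; (b) `g ≥ f` on `H`; (c) every concave function on `H`
majorizing `f` on `H` also majorizes `g` on `H`. -/
theorem stmt_15 (u₁ u₂ : ℝ) (hu₁ : 0 < u₁) (hu₂ : 0 < u₂)
    (f g : ℝ × ℝ → ℝ)
    (hf : ∀ z, f z = (z.1 - z.2)^2)
    (hg : ∀ z, g z = min (u₁ * z.1 + u₂ * z.2)
      (2 * u₁ * u₂ + (u₁ - 2 * u₂) * z.1 + (u₂ - 2 * u₁) * z.2))
    (H : Set (ℝ × ℝ)) (hH : H = Set.Icc 0 u₁ ×ˢ Set.Icc 0 u₂) :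
    ConcaveOn ℝ H g ∧ (∀ z ∈ H, g z ≥ f z) ∧
    (∀ h : ℝ × ℝ → ℝ, ConcaveOn ℝ H h → (∀ z ∈ H, h z ≥ f z) → ∀ z ∈ H, h z ≥ g z) := by
  obtain rfl : g = sqDiffEnvelope u₁ u₂ := funext hg
  obtain rfl : f = fun z ↦ (z.1 - z.2) ^ 2 := funext hf
  subst hH
  refine ⟨(concaveOn_sqDiffEnvelope u₁ u₂).subset (subset_univ _)
      ((convex_Icc 0 u₁).prod (convex_Icc 0 u₂)), fun z ↦ sq_sub_le_sqDiffEnvelope, ?_⟩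
  exact fun h hh hf z ↦ sqDiffEnvelope_le_of_concaveOn hu₁ hu₂ hh hf
end
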